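/- Let 𝔤 = V_1 ⊕ ... ⊕ V_ι be a stratified Lie algebra with graded basis X_1,...,X_q and dual left-invariant 1-forms η_1,...,η_q, and fix κ ∈ {1,...,ι-1} and an index s with d_s = κ+1. Writing X_s = Σ_{d_k=1, d_l=κ, k<l} γ_{k,l}^s [X_k, X_l] (possible since V_{κ+1} = [V_1, V_κ]), define the (m_κ - 2)-form θ_s = Σ (-1)^{h(m_κ,k,l)} γ_{k,l}^s η_1 ∧ ... ∧ \hat{η}_k ∧ ... ∧ \hat{η}_l ∧ ... ∧ η_{m_κ}, with signs chosen so that (-1)^{h} (∧_{i≠k,l} η_i) ∧ η_l ∧ η_k = η_1 ∧ ... ∧ η_{m_κ}. Then for every r with d_r > κ: θ_s ∧ dη_r ∧ η_{m_κ+1} ∧ ... ∧ η_{m_{d_r - 1}} = δ_{r,s} · η_1 ∧ ... ∧ η_{m_{d_r - 1}}. -/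

import Mathlib

/-!
Expand `θ_s ∧ dη_r ∧ η_{m_κ+1} ∧ … ∧ η_{m_{d_r-1}}` as a double sum over the pairs `p` of
`θ_s` and the pairs `u` of `dη_r`. Since `⁅V_a, V_c⁆ ⊆ V_{a+c}`, the coefficient `c_u^r`
vanishes unless both entries of `u` have degree `< d_r`, i.e. index `< m_{d_r-1}`. Hence for
`u ≠ p` an entry of `u` already occurs among the other factors and the term vanishes, while by
the choice of signs the term `u = p` is `c_p^r η_1 ∧ … ∧ η_{m_{d_r-1}}`. Finally
`Σ_p γ_p c_p^r = η_r(X_s) = δ_{r,s}`.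
-/

set_option synthInstance.maxHeartbeats 1000000
open scoped Classical

/-- The span of all brackets `⁅x, y⁆` with `x ∈ A`, `y ∈ B`. -/
def bracketSpan {𝔤 : Type*} [LieRing 𝔤] [LieAlgebra ℝ 𝔤]
    (A B : Submodule ℝ 𝔤) : Submodule ℝ 𝔤 :=
  Submodule.span ℝ {z | ∃ x ∈ A, ∃ y ∈ B, z = ⁅x, y⁆}

/-- The wedge `η_{l_1} ∧ … ∧ η_{l_t}` of dual-basis 1-forms, as an element of the
exterior algebra of the dual space. -/
noncomputable def etaProd {𝔤 : Type*} [LieRing 𝔤] [LieAlgebra ℝ 𝔤] {q : ℕ}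
    (b : Module.Basis (Fin q) ℝ 𝔤) (l : List (Fin q)) :
    ExteriorAlgebra ℝ (Module.Dual ℝ 𝔤) :=
  (l.map fun i => ExteriorAlgebra.ι ℝ (b.coord i)).prod

/-- The Maurer–Cartan differential `dη_r = Σ_{j<i} c_{j,i}^r η_i ∧ η_j`, with
`c_{j,i}^r = η_r(⁅X_j, X_i⁆)`, as an element of the exterior algebra of the dual. -/
noncomputable def dEta {𝔤 : Type*} [LieRing 𝔤] [LieAlgebra ℝ 𝔤] {q : ℕ}
    (b : Module.Basis (Fin q) ℝ 𝔤) (r : Fin q) :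
    ExteriorAlgebra ℝ (Module.Dual ℝ 𝔤) :=
  ∑ p ∈ (Finset.univ ×ˢ Finset.univ).filter (fun p : Fin q × Fin q => p.1 < p.2),
    (b.repr ⁅b p.1, b p.2⁆ r) •
      (ExteriorAlgebra.ι ℝ (b.coord p.2) * ExteriorAlgebra.ι ℝ (b.coord p.1))

lemma List.filter_or_eq_append {α : Type*} (p q : α → Bool) {l : List α}
    (hdisj : ∀ x ∈ l, ¬ (p x ∧ q x)) (hl : l.Pairwise fun x y => ¬ (q x ∧ p y)) :
    l.filter (fun x => p x || q x) = l.filter p ++ l.filter q := by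
  induction l with
  | nil => rfl
  | cons x t ih =>
    rw [List.pairwise_cons] at hl
    have ih := ih (fun y hy => hdisj y (by simp [hy])) hl.2
    by_cases hpx : p x
    · have hqx : q x = false := by simpa [hpx] using hdisj x (by simp)
      simp [hpx, hqx, ih]
    · by_cases hqx : q x
      · have : t.filter p = [] := List.filter_eq_nil_iff.mpr fun y hy hpy => hl.1 y hy ⟨hqx, hpy⟩
        simp [hpx, hqx, ih, this]
      · simp [hpx, hqx, ih]

lemma List.filter_finRange_lt_eq_append {n a c : ℕ} (hac : a ≤ c) :
    (List.finRange n).filter (fun i : Fin n => decide ((i : ℕ) < c)) =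
      (List.finRange n).filter (fun i : Fin n => decide ((i : ℕ) < a)) ++
        (List.finRange n).filter (fun i : Fin n => decide (a ≤ (i : ℕ) ∧ (i : ℕ) < c)) := by
  rw [← List.filter_or_eq_append _ _ (by simp; omega) ((List.pairwise_le_finRange n).imp ?_)]
  · congr 1
    funext i
    simp only [← Bool.decide_or, decide_eq_decide]
    omega
  · intro i j hij
    simp only [decide_eq_true_eq, Fin.le_def] at hij ⊢
    omega

lemma Prod.exists_component_ne_of_ne {α : Type*} [LinearOrder α] {u p : α × α}
    (hu : u.1 < u.2) (hp : p.1 < p.2) (hup : u ≠ p) :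
    ∃ v, (v = u.1 ∨ v = u.2) ∧ v ≠ p.1 ∧ v ≠ p.2 := by
  by_contra! H
  have h1 := H u.1 (Or.inl rfl)
  have h2 := H u.2 (Or.inr rfl)
  by_cases e : u.1 = p.1
  · exact hup (Prod.ext e (h2 fun h => hu.ne (e.trans h.symm)))
  · have := h1 e
    have := h2 (by order)
    order

section EtaProd
variable {𝔤 : Type*} [LieRing 𝔤] [LieAlgebra ℝ 𝔤] {q : ℕ} (b : Module.Basis (Fin q) ℝ 𝔤)

lemma etaProd_append (L₁ L₂ : List (Fin q)) :
    etaProd b (L₁ ++ L₂) = etaProd b L₁ * etaProd b L₂ := by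
  simp [etaProd]

lemma etaProd_eq_zero_of_not_nodup {L : List (Fin q)} (hL : ¬ L.Nodup) : etaProd b L = 0 := by
  have hL' : ¬ Function.Injective fun i : Fin L.length => b.coord L[(i : ℕ)] := fun hinj =>
    hL (List.nodup_iff_injective_get.mpr fun i j hij => hinj (by simp_all))
  rw [etaProd, ← List.ofFn_getElem_eq_map, ← ExteriorAlgebra.ιMulti_apply]
  exact ExteriorAlgebra.ιMulti_eq_zero_of_not_inj hL'

lemma etaProd_mul_dEta_mul (E T : List (Fin q)) (r : Fin q) :
    etaProd b E * dEta b r * etaProd b T =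
      ∑ u ∈ (Finset.univ ×ˢ Finset.univ).filter (fun u : Fin q × Fin q => u.1 < u.2),
        b.repr ⁅b u.1, b u.2⁆ r • etaProd b (E ++ u.2 :: u.1 :: T) := by
  simp only [dEta, Finset.mul_sum, Finset.sum_mul, mul_smul_comm, smul_mul_assoc]
  refine Finset.sum_congr rfl fun u _ => ?_
  simp [etaProd, mul_assoc]

lemma etaProd_mul_dEta_mul_of_unique (E T : List (Fin q)) (r : Fin q) {p : Fin q × Fin q}
    (hp : p.1 < p.2)
    (hdup : ∀ u : Fin q × Fin q, u.1 < u.2 → u ≠ p → b.repr ⁅b u.1, b u.2⁆ r ≠ 0 →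
      ¬ (E ++ u.2 :: u.1 :: T).Nodup) :
    etaProd b E * dEta b r * etaProd b T =
      b.repr ⁅b p.1, b p.2⁆ r • etaProd b (E ++ p.2 :: p.1 :: T) := by
  rw [etaProd_mul_dEta_mul]
  refine Finset.sum_eq_single_of_mem p (by simpa using hp) fun u hu hup => ?_
  by_cases hc : b.repr ⁅b u.1, b u.2⁆ r = 0
  · rw [hc, zero_smul]
  · rw [etaProd_eq_zero_of_not_nodup b (hdup u (by simpa using hu) hup hc), smul_zero]

lemma etaProd_filter_mul_dEta_mul (a c : ℕ) (r : Fin q) {p : Fin q × Fin q} (hp : p.1 < p.2)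
    (hsupp : ∀ u : Fin q × Fin q, u.1 < u.2 → b.repr ⁅b u.1, b u.2⁆ r ≠ 0 →
      (u.1 : ℕ) < c ∧ (u.2 : ℕ) < c) :
    etaProd b ((List.finRange q).filter fun i => decide ((i : ℕ) < a ∧ i ≠ p.1 ∧ i ≠ p.2)) *
        dEta b r *
        etaProd b ((List.finRange q).filter fun i => decide (a ≤ (i : ℕ) ∧ (i : ℕ) < c)) =
      b.repr ⁅b p.1, b p.2⁆ r •
        (etaProd b ((List.finRange q).filter fun i => decide ((i : ℕ) < a ∧ i ≠ p.1 ∧ i ≠ p.2)) *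
          ExteriorAlgebra.ι ℝ (b.coord p.2) * ExteriorAlgebra.ι ℝ (b.coord p.1) *
          etaProd b ((List.finRange q).filter fun i => decide (a ≤ (i : ℕ) ∧ (i : ℕ) < c))) := by
  rw [etaProd_mul_dEta_mul_of_unique b _ _ r hp]
  · simp [etaProd, mul_assoc]
  intro u hu hup hcu
  obtain ⟨v, hvu, hv1, hv2⟩ := Prod.exists_component_ne_of_ne hu hp hup
  have hvc := hsupp u hu hcu
  -- `v < c` is an entry of `u` other than `p.1, p.2`, so it also occurs in one of the two lists
  simp only [List.nodup_append, List.nodup_cons, List.mem_filter, List.mem_finRange]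
  grind

end EtaProd

section Grading
variable {𝔤 : Type*} [LieRing 𝔤] [LieAlgebra ℝ 𝔤]

lemma lie_mem_bracketSpan {A B : Submodule ℝ 𝔤} {x y : 𝔤} (hx : x ∈ A) (hy : y ∈ B) :
    ⁅x, y⁆ ∈ bracketSpan A B :=
  Submodule.subset_span ⟨x, hx, y, hy, rfl⟩

lemma bracketSpan_bot_right (A : Submodule ℝ 𝔤) : bracketSpan A ⊥ = ⊥ := by
  refine le_bot_iff.mp (Submodule.span_le.mpr ?_)
  rintro _ ⟨x, -, y, hy, rfl⟩
  simp [(Submodule.mem_bot ℝ).mp hy]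

lemma lie_mem_of_bracketSpan_eq_succ {W : ℕ → Submodule ℝ 𝔤}
    (hW : ∀ n, bracketSpan (W 0) (W n) = W (n + 1)) :
    ∀ (a c : ℕ) {x y : 𝔤}, x ∈ W a → y ∈ W c → ⁅x, y⁆ ∈ W (a + c + 1) := by
  have base : ∀ c {x y : 𝔤}, x ∈ W 0 → y ∈ W c → ⁅x, y⁆ ∈ W (c + 1) := fun c x y hx hy =>
    hW c ▸ lie_mem_bracketSpan hx hy
  intro a
  induction a with
  | zero => simpa using base
  | succ a ih =>
    intro c x y hx hy
    rw [← hW a] at hx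
    induction hx using Submodule.span_induction with
    | mem z hz =>
      obtain ⟨u, hu, w, hw, rfl⟩ := hz
      rw [lie_lie]
      refine sub_mem ?_ ?_
      · simpa [add_right_comm] using base _ hu (ih c hw hy)
      · simpa [add_assoc, add_left_comm] using ih (c + 1) hw (base c hu hy)
    | zero => simp
    | add z w _ _ hz hw => rw [add_lie]; exact add_mem hz hw
    | smul t z _ hz => rw [smul_lie]; exact Submodule.smul_mem _ t hz

lemma eq_bot_of_bracketSpan_eq_succ {W : ℕ → Submodule ℝ 𝔤}
    (hW : ∀ n, bracketSpan (W 0) (W n) = W (n + 1)) {t : ℕ} (ht : W t = ⊥) :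
    ∀ n, W (t + n) = ⊥
  | 0 => ht
  | n + 1 => by
    rw [← add_assoc, ← hW, eq_bot_of_bracketSpan_eq_succ hW ht n, bracketSpan_bot_right]

/-- `stratum V n` is the paper's `V_{n+1}`, and `⊥` above the top degree. -/
def stratum {ι : ℕ} (V : Fin ι → Submodule ℝ 𝔤) (n : ℕ) : Submodule ℝ 𝔤 :=
  if h : n < ι then V ⟨n, h⟩ else ⊥

@[simp]
lemma stratum_val {ι : ℕ} (V : Fin ι → Submodule ℝ 𝔤) (t : Fin ι) : stratum V t = V t := by
  simp [stratum]

lemma stratum_of_not_lt {ι : ℕ} (V : Fin ι → Submodule ℝ 𝔤) {n : ℕ} (hn : ¬ n < ι) :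
    stratum V n = ⊥ :=
  dif_neg hn

lemma bracketSpan_stratum_eq_succ {ι : ℕ} (hι : 2 ≤ ι) {V : Fin ι → Submodule ℝ 𝔤}
    (hstrat : ∀ j : Fin ι, ∀ h : (j : ℕ) + 1 < ι,
      bracketSpan (V ⟨0, Nat.zero_lt_of_lt hι⟩) (V j) = V ⟨(j : ℕ) + 1, h⟩)
    (hlast : bracketSpan (V ⟨0, Nat.zero_lt_of_lt hι⟩) (V ⟨ι - 1, Nat.sub_one_lt_of_lt hι⟩) = ⊥)
    (n : ℕ) :
    bracketSpan (stratum V 0) (stratum V n) = stratum V (n + 1) := by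
  have h0 : stratum V 0 = V ⟨0, Nat.zero_lt_of_lt hι⟩ := stratum_val V ⟨0, _⟩
  rcases lt_or_ge (n + 1) ι with hn | hn
  · rw [h0, (stratum_val V ⟨n, by omega⟩ : stratum V n = _),
      (stratum_val V ⟨n + 1, hn⟩ : stratum V (n + 1) = _)]
    exact hstrat ⟨n, by omega⟩ hn
  · rw [stratum_of_not_lt V (by omega : ¬ n + 1 < ι), h0]
    rcases eq_or_lt_of_le hn with hn | hn
    · obtain rfl : n = ι - 1 := by omega
      rwa [(stratum_val V ⟨ι - 1, Nat.sub_one_lt_of_lt hι⟩ : stratum V (ι - 1) = _)]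
    · rw [stratum_of_not_lt V (by omega), bracketSpan_bot_right]

end Grading

section GradedBasis
variable {𝔤 : Type*} [LieRing 𝔤] [LieAlgebra ℝ 𝔤] {ι q : ℕ} {V : Fin ι → Submodule ℝ 𝔤}
  {b : Module.Basis (Fin q) ℝ 𝔤} {d : Fin q → Fin ι}

lemma Module.Basis.repr_eq_zero_of_mem_of_degree_ne (hindep : iSupIndep V)
    (hgraded : ∀ i, b i ∈ V (d i)) {x : 𝔤} {t : Fin ι} (hx : x ∈ V t) {r : Fin q}
    (hr : d r ≠ t) : b.repr x r = 0 := by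
  set y := ∑ i ∈ Finset.univ.filter (fun i => d i = t), b.repr x i • b i
  have hy : y ∈ V t := Submodule.sum_mem _ fun i hi =>
    Submodule.smul_mem _ _ ((Finset.mem_filter.mp hi).2 ▸ hgraded i)
  have hxy : x - y ∈ ⨆ (j) (_ : j ≠ t), V j := by
    rw [show x - y = ∑ i ∈ Finset.univ.filter (fun i => d i ≠ t), b.repr x i • b i by
      conv_lhs => rw [← b.sum_repr x, ← Finset.sum_filter_add_sum_filter_not _ (fun i => d i = t)]
      abel]
    exact Submodule.sum_mem _ fun i hi => Submodule.smul_mem _ _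
      (le_iSup₂ (f := fun j _ => V j) (d i) (Finset.mem_filter.mp hi).2 (hgraded i))
  have hxy0 : x = y := sub_eq_zero.mp
    (Submodule.disjoint_def.mp (hindep t) _ (sub_mem hx hy) hxy)
  rw [hxy0, map_sum, Finset.sum_apply']
  refine Finset.sum_eq_zero fun i hi => ?_
  have hir : i ≠ r := fun hir => hr (hir ▸ (Finset.mem_filter.mp hi).2)
  simp [hir]

lemma Module.Basis.repr_mem_stratum_eq_zero (hindep : iSupIndep V)
    (hgraded : ∀ i, b i ∈ V (d i)) {x : 𝔤} {n : ℕ} (hx : x ∈ stratum V n) {r : Fin q}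
    (hr : (d r : ℕ) ≠ n) : b.repr x r = 0 := by
  by_cases hn : n < ι
  · exact b.repr_eq_zero_of_mem_of_degree_ne hindep hgraded
      (t := ⟨n, hn⟩) (by simpa [stratum, hn] using hx) (fun h => hr (by rw [h]))
  · simp [(Submodule.mem_bot ℝ).mp (stratum_of_not_lt V hn ▸ hx)]

lemma Module.Basis.repr_lie_eq_zero_of_degree_ne
    (hW : ∀ n, bracketSpan (stratum V 0) (stratum V n) = stratum V (n + 1))
    (hindep : iSupIndep V) (hgraded : ∀ i, b i ∈ V (d i)) {i j r : Fin q}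
    (hr : (d i : ℕ) + d j + 1 ≠ d r) : b.repr ⁅b i, b j⁆ r = 0 :=
  b.repr_mem_stratum_eq_zero hindep hgraded
    (lie_mem_of_bracketSpan_eq_succ hW (d i) (d j)
      ((stratum_val V (d i)).symm ▸ hgraded i) ((stratum_val V (d j)).symm ▸ hgraded j))
    (Ne.symm hr)

lemma eq_bot_of_forall_degree_ne (hindep : iSupIndep V) (hgraded : ∀ i, b i ∈ V (d i))
    {t : Fin ι} (ht : ∀ j, d j ≠ t) : V t = ⊥ := by
  refine (hindep t).eq_bot_of_le (le_top.trans ?_)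
  rw [← b.span_eq, Submodule.span_le]
  rintro _ ⟨i, rfl⟩
  exact le_iSup₂ (f := fun j _ => V j) (d i) (ht i) (hgraded i)

lemma exists_degree_eq_of_le
    (hW : ∀ n, bracketSpan (stratum V 0) (stratum V n) = stratum V (n + 1))
    (hindep : iSupIndep V) (hgraded : ∀ i, b i ∈ V (d i)) (i : Fin q) (t : ℕ) (ht : t ≤ d i) :
    ∃ j, (d j : ℕ) = t := by
  by_contra! hne
  have hbot : stratum V t = ⊥ := by
    rw [(stratum_val V ⟨t, by omega⟩ : stratum V t = _)]
    exact eq_bot_of_forall_degree_ne hindep hgraded fun j hj => hne j (by rw [hj])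
  have := eq_bot_of_bracketSpan_eq_succ hW hbot ((d i : ℕ) - t)
  rw [Nat.add_sub_cancel' ht, stratum_val] at this
  exact b.ne_zero i ((Submodule.mem_bot ℝ).mp (this ▸ hgraded i))

lemma lt_blockBound_of_degree_lt {m : ℕ → ℕ}
    (hblock : ∀ (i : Fin q) (t : Fin ι), d i = t ↔ (m t ≤ (i : ℕ) ∧ (i : ℕ) < m (t + 1)))
    (hdeg : ∀ i (t : ℕ), t ≤ d i → ∃ j, (d j : ℕ) = t) {i j : Fin q} (hji : (d j : ℕ) < d i) :
    (j : ℕ) < m (d i) := by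
  have key : ∀ t, (d j : ℕ) + 1 ≤ t → t ≤ d i → (j : ℕ) < m t := by
    intro t ht
    induction t, ht using Nat.le_induction with
    | base => exact fun _ => ((hblock j (d j)).mp rfl).2
    | succ t ht ih =>
      intro hti
      obtain ⟨w, hw⟩ := hdeg i t (by omega)
      have hwb := (hblock w (d w)).mp rfl
      rw [hw] at hwb
      have := ih (by omega)
      omega
  exact key _ hji le_rfl

lemma blockBound_le_of_degree_le {m : ℕ → ℕ}
    (hblock : ∀ (i : Fin q) (t : Fin ι), d i = t ↔ (m t ≤ (i : ℕ) ∧ (i : ℕ) < m (t + 1)))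
    (hdeg : ∀ i (t : ℕ), t ≤ d i → ∃ j, (d j : ℕ) = t) {i j : Fin q} (hji : d j ≤ d i) :
    m (d j) ≤ m (d i) := by
  rcases hji.lt_or_eq with hji | hji
  · have := ((hblock j (d j)).mp rfl).1
    have := lt_blockBound_of_degree_lt hblock hdeg (i := i) (j := j) hji
    omega
  · rw [hji]

end GradedBasis

/-- In a stratified Lie algebra `𝔤 = V_1 ⊕ … ⊕ V_ι` with graded basis
`X = b` (blocks of sizes recorded by `m`, degrees `d`, paper-degree of `i` being
`d i + 1`), fix `κ ∈ {1,…,ι-1}` and `s` with paper-degree `κ+1`, write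
`X_s = Σ_{d_k=1, d_l=κ, k<l} γ_{k,l} ⁅X_k, X_l⁆`, and define the `(m_κ-2)`-form
`θ_s = Σ (-1)^{h(k,l)} γ_{k,l} η_1 ∧ … ∧ η̂_k ∧ … ∧ η̂_l ∧ … ∧ η_{m_κ}` with the signs
chosen so that `(-1)^{h(k,l)} (∧_{i≠k,l} η_i) ∧ η_l ∧ η_k = η_1 ∧ … ∧ η_{m_κ}`.
Then for every `r` of paper-degree `d_r > κ`:
`θ_s ∧ dη_r ∧ η_{m_κ+1} ∧ … ∧ η_{m_{d_r-1}} = δ_{r,s} · η_1 ∧ … ∧ η_{m_{d_r-1}}`. -/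
theorem stmt15 (𝔤 : Type*) [LieRing 𝔤] [LieAlgebra ℝ 𝔤]
    (ι q : ℕ) (hι : 2 ≤ ι)
    (V : Fin ι → Submodule ℝ 𝔤)
    (hstrat : ∀ j : Fin ι, ∀ h : (j : ℕ) + 1 < ι,
      bracketSpan (V ⟨0, by omega⟩) (V j) = V ⟨(j : ℕ) + 1, h⟩)
    (hlast : bracketSpan (V ⟨0, by omega⟩) (V ⟨ι - 1, by omega⟩) = ⊥)
    (hindep : iSupIndep V)
    -- graded basis with degrees `d` and block bounds `m` (`m t` = number of basis
    -- vectors of paper-degree `≤ t`):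
    (b : Module.Basis (Fin q) ℝ 𝔤) (d : Fin q → Fin ι)
    (hgraded : ∀ i, b i ∈ V (d i))
    (m : ℕ → ℕ)
    (hblock : ∀ (i : Fin q) (t : Fin ι), d i = t ↔ (m (t : ℕ) ≤ (i : ℕ) ∧ (i : ℕ) < m ((t : ℕ) + 1)))
    -- `κ` and the index `s` of paper-degree `κ + 1`:
    (κ : ℕ) (s : Fin q) (hs : (d s : ℕ) = κ)
    -- `X_s = Σ_{d_k = 1, d_l = κ, k < l} γ_{k,l} ⁅X_k, X_l⁆`:
    (γ : Fin q → Fin q → ℝ)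
    (hγ : b s = ∑ p ∈ (Finset.univ ×ˢ Finset.univ).filter
        (fun p : Fin q × Fin q => (d p.1 : ℕ) = 0 ∧ (d p.2 : ℕ) = κ - 1 ∧ p.1 < p.2),
      γ p.1 p.2 • ⁅b p.1, b p.2⁆)
    -- the signs `h(m_κ, k, l)`:
    (h : Fin q → Fin q → ℕ)
    (hsgn : ∀ p ∈ (Finset.univ ×ˢ Finset.univ).filter
        (fun p : Fin q × Fin q => (d p.1 : ℕ) = 0 ∧ (d p.2 : ℕ) = κ - 1 ∧ p.1 < p.2),
      ((-1 : ℝ) ^ (h p.1 p.2)) •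
          (etaProd b ((List.finRange q).filter
              (fun i => decide ((i : ℕ) < m κ ∧ i ≠ p.1 ∧ i ≠ p.2))) *
            ExteriorAlgebra.ι ℝ (b.coord p.2) * ExteriorAlgebra.ι ℝ (b.coord p.1))
        = etaProd b ((List.finRange q).filter (fun i => decide ((i : ℕ) < m κ)))) :
    ∀ r : Fin q, κ ≤ (d r : ℕ) →
      (∑ p ∈ (Finset.univ ×ˢ Finset.univ).filter
          (fun p : Fin q × Fin q => (d p.1 : ℕ) = 0 ∧ (d p.2 : ℕ) = κ - 1 ∧ p.1 < p.2),
        ((-1 : ℝ) ^ (h p.1 p.2) * γ p.1 p.2) •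
          etaProd b ((List.finRange q).filter
            (fun i => decide ((i : ℕ) < m κ ∧ i ≠ p.1 ∧ i ≠ p.2))))
        * dEta b r
        * etaProd b ((List.finRange q).filter
            (fun i => decide (m κ ≤ (i : ℕ) ∧ (i : ℕ) < m (d r : ℕ))))
      = (if r = s then (1 : ℝ) else 0) •
          etaProd b ((List.finRange q).filter (fun i => decide ((i : ℕ) < m (d r : ℕ)))) := by
  intro r hr
  have hW := bracketSpan_stratum_eq_succ hι hstrat hlast
  have hdeg := exists_degree_eq_of_le hW hindep hgraded
  have hsupp : ∀ u : Fin q × Fin q, u.1 < u.2 → b.repr ⁅b u.1, b u.2⁆ r ≠ 0 →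
      (u.1 : ℕ) < m (d r) ∧ (u.2 : ℕ) < m (d r) := fun u _ hu => by
    have := not_imp_comm.mp (b.repr_lie_eq_zero_of_degree_ne hW hindep hgraded) hu
    exact ⟨lt_blockBound_of_degree_lt hblock hdeg (by omega),
      lt_blockBound_of_degree_lt hblock hdeg (by omega)⟩
  have hsplit := List.filter_finRange_lt_eq_append (n := q)
    (hs ▸ blockBound_le_of_degree_le hblock hdeg (i := r) (j := s) (by omega))
  rw [Finset.sum_mul, Finset.sum_mul]
  trans ∑ p ∈ (Finset.univ ×ˢ Finset.univ).filter
      (fun p : Fin q × Fin q => (d p.1 : ℕ) = 0 ∧ (d p.2 : ℕ) = κ - 1 ∧ p.1 < p.2),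
      (γ p.1 p.2 * b.repr ⁅b p.1, b p.2⁆ r) •
        etaProd b ((List.finRange q).filter (fun i => decide ((i : ℕ) < m (d r : ℕ))))
  · refine Finset.sum_congr rfl fun p hp => ?_
    rw [smul_mul_assoc, smul_mul_assoc,
      etaProd_filter_mul_dEta_mul b _ _ r (Finset.mem_filter.mp hp).2.2.2 hsupp,
      hsplit, etaProd_append, ← hsgn p hp, smul_mul_assoc, smul_smul, smul_smul]
    ring_nf
  · rw [← Finset.sum_smul]
    congr 1
    rw [← if_congr eq_comm rfl rfl, ← b.repr_self_apply, hγ]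
    simp [Finset.sum_apply']
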